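/- For all positive real numbers δ, ε and η there exists a positive integer d = d(δ, ε, η) such that for every finite d-quasirandom group G and all subsets A and B of G with |A| ≥ δ·|G| and |B| ≥ δ·|G|, the set of elements x ∈ G with |A ∩ xB| < (1−η)·|A|·|B|/|G| has size strictly less than ε·|G|. -/

import Mathlib

open Pointwise

/-- A group `G` is `d`-quasirandom if every non-trivial finite-dimensional complex
representation of `G` has degree at least `d`. -/
def IsQuasirandom (G : Type*) [Group G] (d : ℕ) : Prop :=
  ∀ (V : Type) [AddCommGroup V] [Module ℂ V] [FiniteDimensional ℂ V],
    ∀ ρ : G →* LinearMap.GeneralLinearGroup ℂ V, ρ ≠ 1 → d ≤ Module.finrank ℂ V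

/-!
Gowers' mixing argument. Let `f = 1_A - |A|/|G|` and let `K` be convolution by `f` on `ℓ²(G)`,
so that `(K 1_{B⁻¹})(x) = |A ∩ xB| - |A||B|/|G|`. Since `K` commutes with right translations, so
does `K*K`, and every eigenspace of `K*K` is a representation of `G`. An eigenspace for a positive
eigenvalue contains no nonzero constant function (`K` kills constants because `f` has mean zero),
so quasirandomness forces its dimension to be at least `d`. Hence
`d · λ_max(K*K) ≤ tr(K*K) = |G| ‖f‖² ≤ |G| |A|`, which gives
`d · ∑ₓ (|A ∩ xB| - |A||B|/|G|)² ≤ |G| |A| |B|`. By Chebyshev's inequality the number of `x` with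
`|A ∩ xB| < (1 - η)|A||B|/|G|` is at most `|G|³ / (d η² |A| |B|) ≤ |G| / (d η² δ²)`.
-/

open Module Module.End
open scoped InnerProductSpace

section Spectral

variable {𝕜 E F : Type*} [RCLike 𝕜] [NormedAddCommGroup E] [InnerProductSpace 𝕜 E]
  [FiniteDimensional 𝕜 E] [NormedAddCommGroup F] [InnerProductSpace 𝕜 F] [FiniteDimensional 𝕜 F]
  {n : ℕ}

theorem LinearMap.IsSymmetric.re_inner_apply_self_eq_sum {T : E →ₗ[𝕜] E} (hT : T.IsSymmetric)
    (hn : finrank 𝕜 E = n) (v : E) :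
    RCLike.re ⟪T v, v⟫_𝕜 =
      ∑ i, hT.eigenvalues hn i * ‖(hT.eigenvectorBasis hn).repr v i‖ ^ 2 := by
  set b := hT.eigenvectorBasis hn
  rw [← b.repr.inner_map_map, PiLp.inner_apply, map_sum]
  refine Finset.sum_congr rfl fun i _ => ?_
  rw [hT.eigenvectorBasis_apply_self_apply, RCLike.inner_apply, map_mul (starRingEnd 𝕜),
    RCLike.conj_ofReal, mul_left_comm, RCLike.mul_conj, ← RCLike.ofReal_pow, ← RCLike.ofReal_mul,
    RCLike.ofReal_re]

theorem LinearMap.IsSymmetric.re_inner_apply_self_le {T : E →ₗ[𝕜] E} (hT : T.IsSymmetric)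
    (hn : finrank 𝕜 E = n + 1) (v : E) :
    RCLike.re ⟪T v, v⟫_𝕜 ≤ hT.eigenvalues hn 0 * ‖v‖ ^ 2 := by
  rw [hT.re_inner_apply_self_eq_sum hn, ← (hT.eigenvectorBasis hn).repr.norm_map,
    EuclideanSpace.norm_sq_eq, Finset.mul_sum]
  gcongr with i
  exact hT.eigenvalues_antitone hn (Fin.zero_le i)

theorem LinearMap.IsPositive.mul_eigenvalues_le_re_trace {T : E →ₗ[𝕜] E} (hT : T.IsPositive)
    (hn : finrank 𝕜 E = n) (i : Fin n) {d : ℕ}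
    (hd : d ≤ finrank 𝕜 (eigenspace T (hT.isSymmetric.eigenvalues hn i))) :
    d * hT.isSymmetric.eigenvalues hn i ≤ RCLike.re (LinearMap.trace 𝕜 E T) := by
  set μ := hT.isSymmetric.eigenvalues hn
  rw [hT.isSymmetric.re_trace_eq_sum_eigenvalues hn]
  rw [← hT.isSymmetric.card_filter_eigenvalues_eq hn] at hd
  calc d * μ i ≤ (Finset.univ.filter fun j => μ j = μ i).card * μ i := by
        gcongr
        · exact hT.nonneg_eigenvalues hn i
        · exact_mod_cast hd
    _ = ∑ j ∈ Finset.univ.filter fun j => μ j = μ i, μ j := by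
        rw [Finset.sum_congr rfl fun j hj => (Finset.mem_filter.mp hj).2, Finset.sum_const,
          nsmul_eq_mul]
    _ ≤ ∑ j, μ j := Finset.sum_le_sum_of_subset_of_nonneg (Finset.filter_subset _ _)
        fun j _ _ => hT.nonneg_eigenvalues hn j

theorem LinearMap.mul_norm_sq_apply_le_of_le_finrank_eigenspace (K : E →ₗ[𝕜] F) {d : ℕ}
    (hd : ∀ μ : ℝ, 0 < μ → HasEigenvalue (K.adjoint ∘ₗ K) μ →
      d ≤ finrank 𝕜 (eigenspace (K.adjoint ∘ₗ K) μ)) (v : E) :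
    d * ‖K v‖ ^ 2 ≤ RCLike.re (LinearMap.trace 𝕜 E (K.adjoint ∘ₗ K)) * ‖v‖ ^ 2 := by
  have hT := K.isPositive_adjoint_comp_self
  obtain hE | ⟨n, hn⟩ : finrank 𝕜 E = 0 ∨ ∃ n, finrank 𝕜 E = n + 1 :=
    (finrank 𝕜 E).eq_zero_or_eq_succ_pred.imp_right fun h => ⟨_, h⟩
  · have := finrank_zero_iff.mp hE
    simp [Subsingleton.elim v 0]
  set μ := hT.isSymmetric.eigenvalues hn 0
  have hnorm : ‖K v‖ ^ 2 = RCLike.re ⟪(K.adjoint ∘ₗ K) v, v⟫_𝕜 := by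
    rw [LinearMap.comp_apply, LinearMap.adjoint_inner_left, inner_self_eq_norm_sq]
  have htrace : d * μ ≤ RCLike.re (LinearMap.trace 𝕜 E (K.adjoint ∘ₗ K)) := by
    rcases (hT.nonneg_eigenvalues hn 0).eq_or_lt with hμ | hμ
    · simpa [μ, ← hμ] using hT.mul_eigenvalues_le_re_trace hn 0 (Nat.zero_le _)
    · exact hT.mul_eigenvalues_le_re_trace hn 0
        (hd μ hμ (hT.isSymmetric.hasEigenvalue_eigenvalues hn 0))
  calc d * ‖K v‖ ^ 2 ≤ d * (μ * ‖v‖ ^ 2) := by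
        rw [hnorm]; gcongr; exact hT.isSymmetric.re_inner_apply_self_le hn v
    _ = d * μ * ‖v‖ ^ 2 := by ring
    _ ≤ _ := by gcongr

end Spectral

theorem Commute.adjoint_comp_self {𝕜 E : Type*} [RCLike 𝕜] [NormedAddCommGroup E]
    [InnerProductSpace 𝕜 E] [FiniteDimensional 𝕜 E] {K : E →ₗ[𝕜] E} {U : E ≃ₗᵢ[𝕜] E}
    (hKU : Commute K U.toLinearMap) : Commute (K.adjoint ∘ₗ K) U.toLinearMap := by
  have hKU' : Commute K U.symm.toLinearMap := by
    ext x
    apply U.injective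
    simpa using (LinearMap.congr_fun hKU.eq (U.symm x)).symm
  have hadj : Commute K.adjoint U.toLinearMap := by
    have := congrArg LinearMap.adjoint hKU'.eq
    simp only [Module.End.mul_eq_comp, LinearMap.adjoint_comp,
      LinearIsometryEquiv.adjoint_toLinearMap_eq_symm, LinearIsometryEquiv.symm_symm] at this
    exact this.symm
  exact hadj.mul_left hKU

namespace IsQuasirandom

variable {G : Type} [Group G] {d : ℕ}

theorem representation_eq_one (hG : IsQuasirandom G d) {V : Type} [AddCommGroup V]
    [Module ℂ V] [FiniteDimensional ℂ V] (ρ : Representation ℂ G V) (hV : finrank ℂ V < d) :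
    ρ = 1 := by
  by_contra hρ
  refine hV.not_ge (hG V ρ.asGroupHom fun h => hρ ?_)
  ext g : 1
  simpa [Representation.asGroupHom_apply] using congrArg (fun u => (u g : V →ₗ[ℂ] V)) h

theorem apply_eq_of_mem_of_finrank_lt (hG : IsQuasirandom G d) {V : Type} [AddCommGroup V]
    [Module ℂ V] (ρ : Representation ℂ G V) (W : Submodule ℂ V) [FiniteDimensional ℂ W]
    (hW : ∀ g, W ≤ W.comap (ρ g)) (hWd : finrank ℂ W < d) (g : G) {w : V} (hw : w ∈ W) :
    ρ g w = w := by
  have := congrArg (fun σ : Representation ℂ G W => (σ g ⟨w, hw⟩ : V))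
    (hG.representation_eq_one (ρ.subrepresentation W hW) hWd)
  simpa using this

end IsQuasirandom

theorem Finset.card_inter_smul_eq_card_filter {G : Type*} [Group G] [DecidableEq G]
    (A B : Finset G) (x : G) :
    (A ∩ x • B).card = (B.filter fun b => x * b ∈ A).card := by
  rw [← Finset.card_smul_finset x⁻¹, Finset.smul_finset_inter, inv_smul_smul]
  congr 1
  ext b
  simp [Finset.mem_inv_smul_finset_iff, and_comm]

theorem Finset.sum_sq_indicator_sub_card_div_le {α : Type*} [Fintype α] [DecidableEq α]
    (A : Finset α) :
    ∑ y, ((if y ∈ A then 1 else 0) - A.card / Fintype.card α : ℝ) ^ 2 ≤ A.card := by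
  set c : ℝ := A.card / Fintype.card α
  have hsq (y : α) :
      ((if y ∈ A then 1 else 0) - c) ^ 2 = (if y ∈ A then 1 else 0) * (1 - 2 * c) + c ^ 2 := by
    split_ifs <;> ring
  simp only [hsq, Finset.sum_add_distrib, ← Finset.sum_mul, Finset.sum_boole, Finset.sum_const,
    Finset.card_univ, nsmul_eq_mul, Finset.filter_mem_eq_inter, Finset.univ_inter]
  have hc : (Fintype.card α : ℝ) * c ^ 2 = A.card * c := by
    rcases eq_or_ne (Fintype.card α : ℝ) 0 with h | h
    · simp [c, h]
    · rw [sq, ← mul_assoc, mul_div_cancel₀ _ h]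
  nlinarith [show 0 ≤ c by positivity]

theorem Nat.card_subtype_mul_sq_le_sum_sq {ι : Type*} [Fintype ι] (P : ι → Prop) (g : ι → ℝ)
    {t : ℝ} (hP : ∀ x, P x → t ≤ |g x|) (ht : 0 ≤ t) :
    Nat.card {x // P x} * t ^ 2 ≤ ∑ x, g x ^ 2 := by
  classical
  rw [Nat.card_eq_fintype_card, Fintype.card_subtype, ← nsmul_eq_mul]
  calc (Finset.univ.filter P).card • t ^ 2 ≤ ∑ x ∈ Finset.univ.filter P, g x ^ 2 :=
        Finset.card_nsmul_le_sum _ _ _ fun x hx => by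
          rw [← sq_abs (g x)]; exact pow_le_pow_left₀ ht (hP x (Finset.mem_filter.mp hx).2) 2
    _ ≤ ∑ x, g x ^ 2 := Finset.sum_le_sum_of_subset_of_nonneg (Finset.filter_subset _ _)
        fun x _ _ => sq_nonneg _

section ConvolutionOperator

variable {G : Type} [Group G] [Fintype G]

noncomputable def rightTranslation (h : G) : EuclideanSpace ℂ G ≃ₗᵢ[ℂ] EuclideanSpace ℂ G :=
  LinearIsometryEquiv.piLpCongrLeft 2 ℂ ℂ (Equiv.mulRight h⁻¹)

@[simp]
theorem rightTranslation_apply (h : G) (v : EuclideanSpace ℂ G) (x : G) :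
    rightTranslation h v x = v (x * h) := by
  simp [rightTranslation, LinearIsometryEquiv.piLpCongrLeft_apply, Equiv.piCongrLeft'_apply]

variable (G) in
noncomputable def rightRegular :
    Representation ℂ G (EuclideanSpace ℂ G) where
  toFun h := (rightTranslation h).toLinearMap
  map_one' := by ext v x; simp
  map_mul' g h := by ext v x; simp [mul_assoc]

@[simp]
theorem rightRegular_apply_apply (h : G) (v : EuclideanSpace ℂ G) (x : G) :
    rightRegular G h v x = v (x * h) :=
  rightTranslation_apply h v x

noncomputable def convolutionOperator (f : G → ℂ) :
    EuclideanSpace ℂ G →ₗ[ℂ] EuclideanSpace ℂ G where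
  toFun v := WithLp.toLp 2 fun x => ∑ z, f (x * z⁻¹) * v z
  map_add' v w := by ext x; simp [mul_add, Finset.sum_add_distrib]
  map_smul' c v := by ext x; simp [Finset.mul_sum, mul_left_comm]

@[simp]
theorem convolutionOperator_apply (f : G → ℂ) (v : EuclideanSpace ℂ G) (x : G) :
    convolutionOperator f v x = ∑ z, f (x * z⁻¹) * v z := rfl

theorem commute_convolutionOperator_rightTranslation (f : G → ℂ) (h : G) :
    Commute (convolutionOperator f) (rightTranslation h).toLinearMap := by
  ext v x
  change ∑ z, f (x * z⁻¹) * rightTranslation h v z = rightTranslation h (convolutionOperator f v) x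
  simp only [rightTranslation_apply, convolutionOperator_apply]
  exact Fintype.sum_equiv (Equiv.mulRight h) _ _ fun z => by simp [mul_assoc]

theorem convolutionOperator_const {f : G → ℂ} (hf : ∑ y, f y = 0) (c : ℂ) :
    convolutionOperator f (WithLp.toLp 2 fun _ => c) = 0 := by
  ext x
  have : ∑ z, f (x * z⁻¹) = ∑ y, f y :=
    Fintype.sum_equiv ((Equiv.inv G).trans (Equiv.mulLeft x)) _ _ fun z => rfl
  simp [← Finset.sum_mul, this, hf]

theorem re_trace_adjoint_comp_convolutionOperator (f : G → ℂ) :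
    RCLike.re (LinearMap.trace ℂ _ ((convolutionOperator f).adjoint ∘ₗ convolutionOperator f)) =
      Fintype.card G * ∑ y, ‖f y‖ ^ 2 := by
  classical
  rw [LinearMap.trace_eq_sum_inner _ (EuclideanSpace.basisFun G ℂ)]
  simp only [LinearMap.comp_apply, LinearMap.adjoint_inner_right, inner_self_eq_norm_sq_to_K]
  have hcol (z : G) :
      ‖convolutionOperator f (EuclideanSpace.basisFun G ℂ z)‖ ^ 2 = ∑ y, ‖f y‖ ^ 2 := by
    rw [EuclideanSpace.norm_sq_eq]
    exact Fintype.sum_equiv (Equiv.mulRight z⁻¹) _ _ fun x => by simp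
  simp only [← RCLike.ofReal_pow, ← RCLike.ofReal_sum, RCLike.ofReal_re, hcol, Finset.sum_const,
    Finset.card_univ, nsmul_eq_mul]

theorem IsQuasirandom.mul_norm_sq_convolutionOperator_le {d : ℕ} (hG : IsQuasirandom G d)
    {f : G → ℂ} (hf : ∑ y, f y = 0) (v : EuclideanSpace ℂ G) :
    d * ‖convolutionOperator f v‖ ^ 2 ≤ Fintype.card G * (∑ y, ‖f y‖ ^ 2) * ‖v‖ ^ 2 := by
  rw [← re_trace_adjoint_comp_convolutionOperator]
  refine (convolutionOperator f).mul_norm_sq_apply_le_of_le_finrank_eigenspace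
    (fun μ hμ hμT => ?_) v
  set T := (convolutionOperator f).adjoint ∘ₗ convolutionOperator f
  by_contra! hdim
  have hinv (h : G) : eigenspace T μ ≤ (eigenspace T μ).comap (rightRegular G h) :=
    mapsTo_genEigenspace_of_comm
      (commute_convolutionOperator_rightTranslation f h).adjoint_comp_self μ 1
  obtain ⟨w, hw, hw0⟩ := hμT.exists_hasEigenvector
  have hconst : w = WithLp.toLp 2 fun _ => w 1 := by
    ext x
    simpa using congrArg (· 1) (hG.apply_eq_of_mem_of_finrank_lt (rightRegular G) _ hinv hdim x hw)
  have hTw : T w = 0 := by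
    rw [hconst, LinearMap.comp_apply, convolutionOperator_const hf, map_zero]
  rw [mem_eigenspace_iff.mp hw] at hTw
  exact hw0 ((smul_eq_zero.mp hTw).resolve_left (RCLike.ofReal_ne_zero.mpr hμ.ne'))

theorem IsQuasirandom.mul_sum_sq_convolution_le {d : ℕ} (hG : IsQuasirandom G d) {g : G → ℝ}
    (hg : ∑ y, g y = 0) (u : G → ℝ) :
    d * ∑ x, (∑ z, g (x * z⁻¹) * u z) ^ 2 ≤ Fintype.card G * (∑ y, g y ^ 2) * ∑ z, u z ^ 2 := by
  have := hG.mul_norm_sq_convolutionOperator_le (f := fun y => (g y : ℂ)) (by exact_mod_cast hg)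
    (WithLp.toLp 2 fun z => (u z : ℂ))
  simpa [EuclideanSpace.norm_sq_eq, ← Complex.ofReal_mul, ← Complex.ofReal_sum, Complex.norm_real,
    sq_abs] using this

theorem IsQuasirandom.mul_sum_sq_card_inter_smul_sub_le [DecidableEq G] {d : ℕ}
    (hG : IsQuasirandom G d) (A B : Finset G) :
    d * ∑ x : G, ((A ∩ x • B).card - A.card * B.card / Fintype.card G : ℝ) ^ 2 ≤
      Fintype.card G * A.card * B.card := by
  set c : ℝ := A.card / Fintype.card G
  have hconv (x : G) : ∑ z, ((if x * z⁻¹ ∈ A then 1 else 0) - c) * (if z⁻¹ ∈ B then 1 else 0) =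
      (A ∩ x • B).card - A.card * B.card / Fintype.card G := by
    rw [← Fintype.sum_equiv (Equiv.inv G) (fun b => ((if x * b ∈ A then 1 else 0) - c) *
      (if b ∈ B then 1 else 0)) _ fun b => by simp]
    simp only [mul_boole, ← Finset.sum_filter, Finset.filter_mem_eq_inter, Finset.univ_inter,
      Finset.sum_sub_distrib, Finset.sum_const, nsmul_eq_mul, Finset.card_inter_smul_eq_card_filter]
    ring
  have hg : ∑ y, ((if y ∈ A then 1 else 0) - c) = 0 := by
    have : (Fintype.card G : ℝ) ≠ 0 := Nat.cast_ne_zero.mpr Fintype.card_ne_zero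
    simp only [Finset.sum_sub_distrib, Finset.sum_boole, Finset.filter_mem_eq_inter,
      Finset.univ_inter, Finset.sum_const, Finset.card_univ, nsmul_eq_mul, c]
    field_simp
    ring
  have hu : ∑ z : G, (if z⁻¹ ∈ B then (1 : ℝ) else 0) ^ 2 = B.card := by
    rw [← Fintype.sum_equiv (Equiv.inv G) (fun b => if b ∈ B then (1 : ℝ) else 0) _
      fun b => by simp]
    simp
  have := hG.mul_sum_sq_convolution_le hg fun z => if z⁻¹ ∈ B then 1 else 0
  simp only [hconv, hu] at this
  refine this.trans ?_
  gcongr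
  exact A.sum_sq_indicator_sub_card_div_le

theorem IsQuasirandom.mul_card_inter_smul_lt_le [DecidableEq G] {d : ℕ} (hG : IsQuasirandom G d)
    (A B : Finset G) {η : ℝ} (hη : 0 ≤ η) :
    d * η ^ 2 * A.card * B.card *
        Nat.card {x : G // ((A ∩ x • B).card : ℝ) < (1 - η) * A.card * B.card / Fintype.card G} ≤
      (Fintype.card G : ℝ) ^ 3 := by
  set N : ℝ := (Fintype.card G : ℝ)
  set m : ℝ := (Nat.card {x : G // ((A ∩ x • B).card : ℝ) < (1 - η) * A.card * B.card / N} : ℝ)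
  set ab : ℝ := A.card * B.card
  have hN : 0 < N := Nat.cast_pos.mpr Fintype.card_pos
  have hcount : m * (η * ab / N) ^ 2 ≤ ∑ x : G, ((A ∩ x • B).card - ab / N : ℝ) ^ 2 := by
    refine Nat.card_subtype_mul_sq_le_sum_sq _ _ (fun x hx => ?_) (by positivity)
    have : (1 - η) * A.card * B.card / N = ab / N - η * ab / N := by ring
    rw [abs_sub_comm]
    exact le_trans (by linarith) (le_abs_self _)
  have hmix : d * ∑ x : G, ((A ∩ x • B).card - ab / N : ℝ) ^ 2 ≤ N * ab := by
    simpa only [mul_assoc] using hG.mul_sum_sq_card_inter_smul_sub_le A B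
  have key : d * η ^ 2 * A.card * B.card * m * ab ≤ N ^ 3 * ab :=
    calc d * η ^ 2 * A.card * B.card * m * ab = d * (m * (η * ab / N) ^ 2) * N ^ 2 := by
          field_simp
          ring
      _ ≤ (d * ∑ x : G, ((A ∩ x • B).card - ab / N : ℝ) ^ 2) * N ^ 2 := by gcongr
      _ ≤ N * ab * N ^ 2 := by gcongr
      _ = N ^ 3 * ab := by ring
  rcases (show 0 ≤ ab by positivity).eq_or_lt with hab | hab
  · calc d * η ^ 2 * A.card * B.card * m = d * η ^ 2 * ab * m := by ring
      _ ≤ N ^ 3 := by rw [← hab]; simp only [mul_zero, zero_mul]; positivity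
  · exact le_of_mul_le_mul_right key hab

end ConvolutionOperator

theorem stmt_2 (δ ε η : ℝ) (hδ : 0 < δ) (hε : 0 < ε) (hη : 0 < η) :
    ∃ d : ℕ, 0 < d ∧
      ∀ (G : Type) [Group G] [Fintype G] [DecidableEq G], IsQuasirandom G d →
        ∀ A B : Finset G,
          δ * Fintype.card G ≤ A.card →
          δ * Fintype.card G ≤ B.card →
          (Nat.card {x : G //
              ((A ∩ x • B).card : ℝ) < (1 - η) * A.card * B.card / Fintype.card G} : ℝ) <
            ε * Fintype.card G := by
  refine ⟨⌈(ε * η ^ 2 * δ ^ 2)⁻¹⌉₊ + 1, Nat.succ_pos _, fun G _ _ _ hG A B hA hB => ?_⟩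
  set N : ℝ := (Fintype.card G : ℝ)
  set d : ℝ := ((⌈(ε * η ^ 2 * δ ^ 2)⁻¹⌉₊ + 1 : ℕ) : ℝ)
  set m : ℝ := (Nat.card {x : G // ((A ∩ x • B).card : ℝ) < (1 - η) * A.card * B.card / N} : ℝ)
  have hN : 0 < N := Nat.cast_pos.mpr Fintype.card_pos
  have hdε : 1 < d * (ε * η ^ 2 * δ ^ 2) := by
    rw [← inv_lt_iff_one_lt_mul₀ (by positivity)]
    exact (Nat.le_ceil _).trans_lt (by simp [d])
  have hbad : d * η ^ 2 * A.card * B.card * m ≤ N ^ 3 := hG.mul_card_inter_smul_lt_le A B hη.le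
  have hδN : d * η ^ 2 * (δ * N) * (δ * N) * m ≤ N ^ 3 := le_trans (by gcongr) hbad
  have hm : d * η ^ 2 * δ ^ 2 * m ≤ N := by
    refine le_of_mul_le_mul_left ?_ (pow_pos hN 2)
    linarith [hδN]
  nlinarith [mul_le_mul_of_nonneg_left hm hε.le, mul_pos hε hN]
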